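/- For b > 1, as K → ∞ (with β = b^{1/K}) one has: (i) (1/(2K))·Σ_{k=1}^{K-2} (β^{-k/2} + β·β^{k/2}) → (b-1)/(√b·log b); (ii) (1+2β)/K − β(1 + 1/log b) → −(1 + 1/log b); and (iii) (1/(2β^{(K-1)/2}))·(b/log b − (b−β)/(K(β−1))) → 1/(2√b·log b). Consequently β·(f(β) + t_0 + 2Σ_{k=1}^{K-1} t_k) → (√b + 2b − 1)/(√b·log b), where f(β) → 1 + 2/log b. -/

import Mathlib

/-!
Write `β = exp (log b / K)`. The sums in (i) are geometric with ratios `exp (∓ log b / (2K))`,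
so after dividing by `K` they are Riemann sums of `∫₀¹ b^{∓x/2} dx`; in closed form they reduce
to `K (exp (x / K) - 1) → x`, which is the derivative of `exp` at `0`. The same limit gives
`K (β - 1) → log b` in (iii). For `k ≤ K - 2` the coefficient `t_k` is the `k`-th summand of (i),
so the last limit is a linear combination of (i)–(iv).
-/

open Real Filter Finset

/-- `β = b^{1/K}`. -/
noncomputable def beta12 (b : ℝ) (K : ℕ) : ℝ := b ^ ((1 : ℝ) / K)

/-- The function `f(α) = (1+α)/2 + 2/log b + ((α-1)/(2 log b))(1 - log α)`. -/
noncomputable def f12 (b α : ℝ) : ℝ :=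
  (1 + α) / 2 + 2 / Real.log b + ((α - 1) / (2 * Real.log b)) * (1 - Real.log α)

/-- The coefficients `t_k` for `1 ≤ k ≤ K-1`: `t_k = (1+β^{1+k})/(2K·β^{k/2})` for
`k ≤ K-2` and `t_{K-1} = (1/(2β^{(K-1)/2}))·(b/log b − (b−β)/(K(β−1)))`. -/
noncomputable def t12 (b : ℝ) (K k : ℕ) : ℝ :=
  if k < K - 1 then
    (1 + beta12 b K ^ (1 + (k : ℝ))) / (2 * K * beta12 b K ^ ((k : ℝ) / 2))
  else
    (1 / (2 * beta12 b K ^ (((K : ℝ) - 1) / 2)))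
      * (b / Real.log b - (b - beta12 b K) / (K * (beta12 b K - 1)))

theorem HasDerivAt.tendsto_natCast_mul_sub {f : ℝ → ℝ} {f' : ℝ} (hf : HasDerivAt f f' 0)
    (x : ℝ) : Tendsto (fun n : ℕ => n * (f (x / n) - f 0)) atTop (nhds (x * f')) := by
  rcases eq_or_ne x 0 with rfl | hx
  · simp
  have hxn : Tendsto (fun n : ℕ => x / n) atTop (nhdsWithin 0 {0}ᶜ) := by
    refine tendsto_nhdsWithin_iff.2 ⟨tendsto_const_div_atTop_nhds_zero_nat x, ?_⟩
    filter_upwards [eventually_ne_atTop 0] with n hn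
    exact div_ne_zero hx (Nat.cast_ne_zero.2 hn)
  refine ((hf.tendsto_slope_zero.comp hxn).const_mul x).congr' ?_
  filter_upwards [eventually_ne_atTop 0] with n hn
  simp only [Function.comp_apply, zero_add, smul_eq_mul]
  field_simp

theorem Real.tendsto_natCast_mul_exp_div_sub_one (x : ℝ) :
    Tendsto (fun n : ℕ => n * (exp (x / n) - 1)) atTop (nhds x) := by
  simpa using (Real.hasDerivAt_exp 0).tendsto_natCast_mul_sub x

theorem Real.tendsto_inv_mul_sum_Icc_exp_div_pow {x : ℝ} (hx : x ≠ 0) :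
    Tendsto (fun n : ℕ => (n : ℝ)⁻¹ * ∑ k ∈ Icc 1 (n - 2), exp (x / n) ^ k)
      atTop (nhds ((exp x - 1) / x)) := by
  have hq : Tendsto (fun n : ℕ => exp (x / n)) atTop (nhds 1) :=
    tendsto_exp_nhds_zero_nhds_one.comp (tendsto_const_div_atTop_nhds_zero_nat x)
  have hlim := ((tendsto_const_nhds (x := exp x)).div hq one_ne_zero |>.sub hq).div
    (tendsto_natCast_mul_exp_div_sub_one x) hx
  rw [div_one] at hlim
  refine hlim.congr' ?_
  filter_upwards [eventually_ge_atTop 2] with n hn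
  have hn0 : (n : ℝ) ≠ 0 := by positivity
  have hq1 : exp (x / n) ≠ 1 := by simpa [hn0] using hx
  have hqn : exp (x / n) ^ (n - 1) = exp x / exp (x / n) := by
    rw [pow_sub₀ _ (exp_ne_zero _) (by omega), ← exp_nat_mul, mul_div_cancel₀ _ hn0, pow_one,
      ← div_eq_mul_inv]
  rw [← Ico_add_one_right_eq_Icc, show n - 2 + 1 = n - 1 by omega,
    geom_sum_Ico hq1 (by omega), hqn, pow_one]
  simp only [Pi.div_apply]
  field_simp [sub_ne_zero.2 hq1]

theorem Real.exp_log_div_two {b : ℝ} (hb : 0 < b) : exp (log b / 2) = √b := by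
  rw [exp_half, exp_log hb]

section Beta12

variable {b : ℝ}

theorem beta12_eq_exp (hb : 0 < b) (K : ℕ) : beta12 b K = exp (log b / K) := by
  rw [beta12, rpow_def_of_pos hb, mul_one_div]

theorem beta12_rpow_eq_exp (hb : 0 < b) (K : ℕ) (y : ℝ) :
    beta12 b K ^ y = exp (y * log b / K) := by
  rw [beta12_eq_exp hb, ← exp_mul]
  ring_nf

theorem tendsto_beta12 (hb : 0 < b) : Tendsto (beta12 b) atTop (nhds 1) :=
  (tendsto_exp_nhds_zero_nhds_one.comp (tendsto_const_div_atTop_nhds_zero_nat (log b))).congr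
    fun K => (beta12_eq_exp hb K).symm

theorem tendsto_natCast_mul_beta12_sub_one (hb : 0 < b) :
    Tendsto (fun K : ℕ => K * (beta12 b K - 1)) atTop (nhds (log b)) := by
  simpa only [beta12_eq_exp hb] using tendsto_natCast_mul_exp_div_sub_one (log b)

theorem tendsto_beta12_rpow_natCast_sub_one_div_two (hb : 0 < b) :
    Tendsto (fun K : ℕ => beta12 b K ^ (((K : ℝ) - 1) / 2)) atTop (nhds (√b)) := by
  have hexp : Tendsto (fun K : ℕ => log b / 2 - (log b / 2) / K) atTop (nhds (log b / 2)) := by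
    simpa using tendsto_const_nhds.sub (tendsto_const_div_atTop_nhds_zero_nat (log b / 2))
  rw [← exp_log_div_two hb]
  refine (continuous_exp.tendsto _ |>.comp hexp).congr' ?_
  filter_upwards [eventually_ne_atTop 0] with K hK
  rw [Function.comp_apply, beta12_rpow_eq_exp hb]
  congr 1
  field_simp

theorem tendsto_half_inv_mul_sum_beta12 (hb : 0 < b) (hb1 : b ≠ 1) :
    Tendsto (fun K : ℕ => (1 / (2 * (K : ℝ))) *
        ∑ k ∈ Finset.Icc 1 (K - 2),
          (beta12 b K ^ (-(k : ℝ) / 2) + beta12 b K * beta12 b K ^ ((k : ℝ) / 2)))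
      atTop (nhds ((b - 1) / (√b * log b))) := by
  have hL : log b / 2 ≠ 0 := div_ne_zero (log_ne_zero_of_pos_of_ne_one hb hb1) two_ne_zero
  have hlim := ((tendsto_inv_mul_sum_Icc_exp_div_pow (neg_ne_zero.2 hL)).add
    ((tendsto_beta12 hb).mul (tendsto_inv_mul_sum_Icc_exp_div_pow hL))).const_mul (1 / 2)
  have hval : 1 / 2 * ((exp (-(log b / 2)) - 1) / -(log b / 2)
      + 1 * ((exp (log b / 2) - 1) / (log b / 2))) = (b - 1) / (√b * log b) := by
    have hs : 0 < √b := sqrt_pos.2 hb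
    rw [exp_neg, exp_log_div_two hb]
    field_simp
    congr 1
    linear_combination mul_self_sqrt hb.le
  rw [← hval]
  refine hlim.congr fun K => ?_
  have hterm : ∀ k : ℕ, beta12 b K ^ (-(k : ℝ) / 2) + beta12 b K * beta12 b K ^ ((k : ℝ) / 2)
      = exp (-(log b / 2) / K) ^ k + beta12 b K * exp (log b / 2 / K) ^ k := by
    intro k
    rw [beta12_rpow_eq_exp hb, beta12_rpow_eq_exp hb, ← exp_nat_mul, ← exp_nat_mul]
    ring_nf
  simp only [hterm, sum_add_distrib, ← mul_sum]
  ring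

theorem tendsto_t_zero (hb : 0 < b) :
    Tendsto (fun K : ℕ =>
        (1 + 2 * beta12 b K) / K - beta12 b K * (1 + 1 / log b))
      atTop (nhds (-(1 + 1 / log b))) := by
  have hβ := tendsto_beta12 hb
  have hlim := (((tendsto_const_nhds (x := (1 : ℝ))).add (hβ.const_mul 2)).div_atTop
    tendsto_natCast_atTop_atTop).sub (hβ.mul_const (1 + 1 / log b))
  rwa [one_mul, zero_sub] at hlim

theorem tendsto_t_last (hb : 0 < b) (hb1 : b ≠ 1) :
    Tendsto (fun K : ℕ =>
        (1 / (2 * beta12 b K ^ (((K : ℝ) - 1) / 2)))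
          * (b / log b - (b - beta12 b K) / (K * (beta12 b K - 1))))
      atTop (nhds (1 / (2 * √b * log b))) := by
  have hL : log b ≠ 0 := log_ne_zero_of_pos_of_ne_one hb hb1
  have hlim := ((tendsto_const_nhds (x := (1 : ℝ))).div
      ((tendsto_beta12_rpow_natCast_sub_one_div_two hb).const_mul 2) (by positivity)).mul
    ((tendsto_const_nhds (x := b / log b)).sub (((tendsto_const_nhds (x := b)).sub
      (tendsto_beta12 hb)).div (tendsto_natCast_mul_beta12_sub_one hb) hL))
  have hval : 1 / (2 * √b) * (b / log b - (b - 1) / log b) = 1 / (2 * √b * log b) := by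
    field_simp
    ring
  exact hval ▸ hlim

theorem tendsto_f12_beta12 (hb : 0 < b) :
    Tendsto (fun K : ℕ => f12 b (beta12 b K)) atTop (nhds (1 + 2 / log b)) := by
  have hcont : ContinuousAt (f12 b) 1 := by
    unfold f12
    fun_prop (disch := norm_num)
  have hf1 : f12 b 1 = 1 + 2 / log b := by simp [f12]
  exact hf1 ▸ hcont.tendsto.comp (tendsto_beta12 hb)

theorem t12_of_lt (hb : 0 < b) {K k : ℕ} (hk : k < K - 1) :
    t12 b K k = (1 / (2 * (K : ℝ))) *
      (beta12 b K ^ (-(k : ℝ) / 2) + beta12 b K * beta12 b K ^ ((k : ℝ) / 2)) := by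
  have hβ : 0 < beta12 b K := rpow_pos_of_pos hb _
  rw [t12, if_pos hk, neg_div, rpow_neg hβ.le,
    show (1 : ℝ) + k = 1 + (k / 2 + k / 2) by ring, rpow_add hβ, rpow_add hβ, rpow_one]
  have : 0 < beta12 b K ^ ((k : ℝ) / 2) := rpow_pos_of_pos hβ _
  field_simp

theorem sum_Icc_t12 (hb : 0 < b) {K : ℕ} (hK : 2 ≤ K) :
    ∑ k ∈ Icc 1 (K - 1), t12 b K k
      = (1 / (2 * (K : ℝ))) * ∑ k ∈ Icc 1 (K - 2),
          (beta12 b K ^ (-(k : ℝ) / 2) + beta12 b K * beta12 b K ^ ((k : ℝ) / 2))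
        + (1 / (2 * beta12 b K ^ (((K : ℝ) - 1) / 2)))
          * (b / log b - (b - beta12 b K) / (K * (beta12 b K - 1))) := by
  rw [show K - 1 = K - 2 + 1 by omega, sum_Icc_succ_top (by omega), mul_sum]
  congr 1
  · refine sum_congr rfl fun k hk => t12_of_lt hb ?_
    have := (mem_Icc.1 hk).2
    omega
  · rw [t12, if_neg (by omega)]

end Beta12

/-- Limits as `K → ∞`, with `β = b^{1/K}`:
(i) `(1/(2K))·Σ_{k=1}^{K-2} (β^{-k/2} + β·β^{k/2}) → (b-1)/(√b·log b)`;
(ii) `t_0 = (1+2β)/K − β(1 + 1/log b) → −(1 + 1/log b)`;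
(iii) `t_{K-1} → 1/(2√b·log b)`;
and consequently `β·(f(β) + t_0 + 2Σ_{k=1}^{K-1} t_k) → (√b + 2b − 1)/(√b·log b)`,
where `f(β) → 1 + 2/log b`. -/
theorem randomized_ratio_limits (b : ℝ) (hb : 1 < b) :
    Tendsto (fun K : ℕ => (1 / (2 * (K : ℝ))) *
        ∑ k ∈ Finset.Icc 1 (K - 2),
          (beta12 b K ^ (-(k : ℝ) / 2) + beta12 b K * beta12 b K ^ ((k : ℝ) / 2)))
      atTop (nhds ((b - 1) / (Real.sqrt b * Real.log b))) ∧
    Tendsto (fun K : ℕ =>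
        (1 + 2 * beta12 b K) / K - beta12 b K * (1 + 1 / Real.log b))
      atTop (nhds (-(1 + 1 / Real.log b))) ∧
    Tendsto (fun K : ℕ =>
        (1 / (2 * beta12 b K ^ (((K : ℝ) - 1) / 2)))
          * (b / Real.log b - (b - beta12 b K) / (K * (beta12 b K - 1))))
      atTop (nhds (1 / (2 * Real.sqrt b * Real.log b))) ∧
    Tendsto (fun K : ℕ => f12 b (beta12 b K)) atTop (nhds (1 + 2 / Real.log b)) ∧
    Tendsto (fun K : ℕ =>
        beta12 b K * (f12 b (beta12 b K)
          + ((1 + 2 * beta12 b K) / K - beta12 b K * (1 + 1 / Real.log b))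
          + 2 * ∑ k ∈ Finset.Icc 1 (K - 1), t12 b K k))
      atTop (nhds ((Real.sqrt b + 2 * b - 1) / (Real.sqrt b * Real.log b))) := by
  have hb0 : 0 < b := by linarith
  have h1 := tendsto_half_inv_mul_sum_beta12 hb0 hb.ne'
  have h2 := tendsto_t_zero hb0
  have h3 := tendsto_t_last hb0 hb.ne'
  have h4 := tendsto_f12_beta12 hb0
  refine ⟨h1, h2, h3, h4, ?_⟩
  have hlim := (tendsto_beta12 hb0).mul ((h4.add h2).add ((h1.add h3).const_mul 2))
  have hval : 1 * (1 + 2 / log b + -(1 + 1 / log b)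
      + 2 * ((b - 1) / (√b * log b) + 1 / (2 * √b * log b)))
      = (√b + 2 * b - 1) / (√b * log b) := by
    have : 0 < √b := sqrt_pos.2 hb0
    have : log b ≠ 0 := (log_pos hb).ne'
    field_simp
    ring
  refine hval ▸ hlim.congr' ?_
  filter_upwards [eventually_ge_atTop 2] with K hK
  rw [sum_Icc_t12 hb0 hK]
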